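/- arXiv:2306.02445 — 3 statements merged into one kernel-verified Lean document; each statement's English description precedes it below -/
import Mathlib

section
/- For any δ > 0 and initial data λ(0) = 1, λ'(0) = λ₁ ∈ ℝ, the ODE λ''(t)λ(t)^{3γ-2} = δ with 1 < γ ≤ 5/3 has a unique global solution λ : [0,∞) → (0,∞), and there exist constants 0 < c₁ ≤ c₂ such that c₁ t ≤ λ(t) ≤ c₂ t for all sufficiently large t. -/
/-!
With `α = 3γ - 2 > 1` the equation reads `λ'' = δ λ^{-α} > 0`, so the speed `v = λ'` increases
strictly and can be used as the parameter along a solution. Conservation of the energy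
`λ'^2 / 2 + δ λ^{1-α} / (α - 1)` gives `λ = q(v)^{-1/(α-1)}` with
`q(v) = 1 + (α - 1)/(2δ) (λ₁² - v²)`, and `dt/dv = 1/λ'' = q(v)^{-α/(α-1)} / δ`. Since `q` vanishes
to first order at the ends `±vmax` of the speed range and `α/(α-1) > 1`, the time `t(v)` spent
between `λ₁` and `v` tends to `±∞` there; inverting it yields a solution on all of `ℝ`, whose speed
increases to `vmax`, so it grows linearly. Uniqueness holds because `x ↦ δ x^{-α}` is locally
Lipschitz on `(0, ∞)`.
-/

noncomputable section
open Real Set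

/-- `lam` is a positive solution on `[0,∞)` of the Sideris ODE
`λ'' λ^{3γ-2} = δ` with initial data `λ(0) = 1`, `λ'(0) = λ₁`. -/
def SiderisSol (γ δ lam₁ : ℝ) (lam : ℝ → ℝ) : Prop :=
  (∀ t ∈ Ici (0:ℝ), 0 < lam t ∧
      HasDerivAt lam (deriv lam t) t ∧
      HasDerivAt (deriv lam) (deriv (deriv lam) t) t ∧
      deriv (deriv lam) t * (lam t) ^ (3 * γ - 2) = δ) ∧
  lam 0 = 1 ∧ deriv lam 0 = lam₁

open Filter Topology Function

section InverseOfStrictMonoOn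

variable {T : ℝ → ℝ} {s : Set ℝ}

theorem StrictMonoOn.strictMono_invFunOn (hT : StrictMonoOn T s) (hs : SurjOn T s univ) :
    StrictMono (invFunOn T s) := fun y₁ y₂ h => by
  rwa [← hT.lt_iff_lt (invFunOn_mem (hs trivial)) (invFunOn_mem (hs trivial)),
    invFunOn_eq (hs trivial), invFunOn_eq (hs trivial)]

theorem StrictMonoOn.continuous_invFunOn (hT : StrictMonoOn T s) (hs : SurjOn T s univ)
    (ho : IsOpen s) : Continuous (invFunOn T s) := by
  refine continuous_iff_continuousAt.2 fun y => continuousAt_of_monotoneOn_of_image_mem_nhds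
    ((hT.strictMono_invFunOn hs).monotone.monotoneOn univ) univ_mem ?_
  refine mem_of_superset (ho.mem_nhds (invFunOn_mem (hs trivial))) fun x hx => ?_
  exact ⟨T x, trivial, hT.injOn.leftInvOn_invFunOn hx⟩

theorem StrictMonoOn.hasDerivAt_invFunOn (hT : StrictMonoOn T s) (hs : SurjOn T s univ)
    (ho : IsOpen s) {T' : ℝ → ℝ} (hT' : ∀ x ∈ s, HasDerivAt T (T' x) x)
    (hT'0 : ∀ x ∈ s, T' x ≠ 0) (y : ℝ) :
    HasDerivAt (invFunOn T s) (T' (invFunOn T s y))⁻¹ y :=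
  (hT' _ (invFunOn_mem (hs trivial))).of_local_left_inverse
    (hT.continuous_invFunOn hs ho).continuousAt (hT'0 _ (invFunOn_mem (hs trivial)))
    (Eventually.of_forall fun _ => invFunOn_eq (hs trivial))

end InverseOfStrictMonoOn

theorem tendsto_intervalIntegral_nhdsLT_atTop {g : ℝ → ℝ} {a b c p : ℝ} (hab : a < b)
    (hc : 0 < c) (hp : 1 < p) (hg : ContinuousOn g (Ico a b))
    (hle : ∀ w ∈ Ico a b, c * (b - w) ^ (-p) ≤ g w) :
    Tendsto (fun v => ∫ w in a..v, g w) (𝓝[<] b) atTop := by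
  have hbound : ∀ v ∈ Ico a b,
      c / (p - 1) * ((b - v) ^ (1 - p) - (b - a) ^ (1 - p)) ≤ ∫ w in a..v, g w := by
    intro v hv
    have hsub : Icc a v ⊆ Ico a b := Icc_subset_Ico_right hv.2
    have hpow : ContinuousOn (fun w => c * (b - w) ^ (-p)) (Icc a v) := fun w hw =>
      (continuousAt_const.mul ((continuous_const.sub continuous_id).continuousAt.rpow_const
        (Or.inl (sub_pos.2 (hsub hw).2).ne'))).continuousWithinAt
    have hzero : (0 : ℝ) ∉ uIcc (b - v) (b - a) := by
      rw [uIcc_of_le (by linarith [hv.1])]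
      exact fun h => (sub_pos.2 hv.2).not_ge h.1
    have heval : ∫ w in a..v, c * (b - w) ^ (-p) =
        c / (p - 1) * ((b - v) ^ (1 - p) - (b - a) ^ (1 - p)) := by
      rw [intervalIntegral.integral_const_mul,
        intervalIntegral.integral_comp_sub_left (fun w => w ^ (-p)),
        integral_rpow (Or.inr ⟨by linarith, hzero⟩), show -p + 1 = 1 - p by ring]
      field_simp [show 1 - p ≠ 0 by linarith, show p - 1 ≠ 0 by linarith]
      ring
    rw [← heval]
    exact intervalIntegral.integral_mono_on hv.1
      (hpow.intervalIntegrable_of_Icc hv.1) ((hg.mono hsub).intervalIntegrable_of_Icc hv.1)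
      fun w hw => hle w (hsub hw)
  have hgap : Tendsto (fun v => b - v) (𝓝[<] b) (𝓝[>] 0) :=
    tendsto_nhdsWithin_of_tendsto_nhds_of_eventually_within _
      (tendsto_nhdsWithin_of_tendsto_nhds (by simpa using (continuous_sub_left b).tendsto b))
      (eventually_nhdsWithin_of_forall fun _ hv => mem_Ioi.2 (sub_pos.2 hv))
  have hlow : Tendsto (fun v => c / (p - 1) * ((b - v) ^ (1 - p) - (b - a) ^ (1 - p)))
      (𝓝[<] b) atTop :=
    (tendsto_atTop_add_const_right _ _
      ((tendsto_rpow_neg_nhdsGT_zero (by linarith)).comp hgap)).const_mul_atTop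
        (div_pos hc (by linarith))
  exact tendsto_atTop_mono' _ (eventually_of_mem (Ico_mem_nhdsLT hab) hbound) hlow

theorem ODE_solution_unique_of_second_order {F : ℝ → ℝ} {U : Set ℝ} (hF : LocallyLipschitzOn U F)
    {f f' g g' : ℝ → ℝ} {a b : ℝ}
    (hf : ∀ t ∈ Icc a b, f t ∈ U ∧ HasDerivAt f (f' t) t ∧ HasDerivAt f' (F (f t)) t)
    (hg : ∀ t ∈ Icc a b, g t ∈ U ∧ HasDerivAt g (g' t) t ∧ HasDerivAt g' (F (g t)) t)
    (ha : f a = g a) (ha' : f' a = g' a) : EqOn f g (Icc a b) := by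
  have hfc : ContinuousOn f (Icc a b) := fun t ht => (hf t ht).2.1.continuousAt.continuousWithinAt
  have hgc : ContinuousOn g (Icc a b) := fun t ht => (hg t ht).2.1.continuousAt.continuousWithinAt
  set K := f '' Icc a b ∪ g '' Icc a b
  have hK : IsCompact K :=
    (isCompact_Icc.image_of_continuousOn hfc).union (isCompact_Icc.image_of_continuousOn hgc)
  have hKU : K ⊆ U := union_subset (image_subset_iff.2 fun t ht => (hf t ht).1)
    (image_subset_iff.2 fun t ht => (hg t ht).1)
  obtain ⟨L, hL⟩ := (hF.mono hKU).exists_lipschitzOnWith_of_compact hK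
  have hlip : LipschitzOnWith (max 1 (L * 1)) (fun p : ℝ × ℝ => (p.2, F p.1)) (K ×ˢ univ) :=
    LipschitzWith.prod_snd.lipschitzOnWith.prodMk
      (hL.comp LipschitzWith.prod_fst.lipschitzOnWith fun p hp => hp.1)
  have hsol : ∀ {x x' : ℝ → ℝ},
      (∀ t ∈ Icc a b, x t ∈ U ∧ HasDerivAt x (x' t) t ∧ HasDerivAt x' (F (x t)) t) →
      ∀ t ∈ Ico a b, HasDerivWithinAt (fun t => (x t, x' t)) (x' t, F (x t)) (Ici t) t :=
    fun hx t ht => ((hx t (Ico_subset_Icc_self ht)).2.1.prodMk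
      (hx t (Ico_subset_Icc_self ht)).2.2).hasDerivWithinAt
  have hpair := ODE_solution_unique_of_mem_Icc_right (v := fun _ p => (p.2, F p.1))
    (s := fun _ => K ×ˢ univ) (fun _ _ => hlip)
    (hfc.prodMk fun t ht => (hf t ht).2.2.continuousAt.continuousWithinAt) (hsol hf)
    (fun t ht => ⟨Or.inl ⟨t, Ico_subset_Icc_self ht, rfl⟩, trivial⟩)
    (hgc.prodMk fun t ht => (hg t ht).2.2.continuousAt.continuousWithinAt) (hsol hg)
    (fun t ht => ⟨Or.inr ⟨t, Ico_subset_Icc_self ht, rfl⟩, trivial⟩) (by rw [ha, ha'])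
  exact fun t ht => congrArg Prod.fst (hpair ht)

theorem exists_linear_bounds_of_hasDerivAt {f f' : ℝ → ℝ} {m M t₁ : ℝ}
    (hf : ∀ t, HasDerivAt f (f' t) t) (hm : 0 < m) (hM : ∀ t, f' t ≤ M)
    (hm' : ∀ t ≥ t₁, m ≤ f' t) :
    ∃ c₁ c₂ : ℝ, 0 < c₁ ∧ c₁ ≤ c₂ ∧ ∃ T : ℝ, ∀ t ≥ T, c₁ * t ≤ f t ∧ f t ≤ c₂ * t := by
  have hderiv : deriv f = f' := funext fun t => (hf t).deriv
  have hdiff : Differentiable ℝ f := fun t => (hf t).differentiableAt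
  have hupper : ∀ t ≥ 0, f t - f 0 ≤ M * (t - 0) := fun t ht =>
    image_sub_le_mul_sub_of_deriv_le hdiff (by simpa [hderiv] using hM) ht
  have hlower : ∀ t ≥ t₁, m * (t - t₁) ≤ f t - f t₁ := fun t ht =>
    (convex_Ici t₁).mul_sub_le_image_sub_of_le_deriv hdiff.continuous.continuousOn
      hdiff.differentiableOn (fun s hs => hderiv ▸ hm' s (le_of_lt (by simpa using hs)))
      t₁ (mem_Ici.2 le_rfl) t ht ht
  have hmM : m ≤ M := (hm' t₁ le_rfl).trans (hM t₁)
  refine ⟨m / 2, |f 0| + M, by positivity, by linarith [abs_nonneg (f 0)],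
    max (max 1 t₁) (2 * t₁ - 2 * f t₁ / m), fun t ht => ?_⟩
  have h1 : 1 ≤ t := (le_max_left _ _).trans ((le_max_left _ _).trans ht)
  have ht₁ : t₁ ≤ t := (le_max_right _ _).trans ((le_max_left _ _).trans ht)
  have h2 : 2 * t₁ - 2 * f t₁ / m ≤ t := (le_max_right _ _).trans ht
  have h3 : m * (2 * t₁ - 2 * f t₁ / m) ≤ m * t := mul_le_mul_of_nonneg_left h2 hm.le
  rw [mul_sub, mul_div_assoc', mul_div_cancel_left₀ _ hm.ne'] at h3
  constructor
  · nlinarith [hlower t ht₁]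
  · linarith [hupper t (by linarith), le_abs_self (f 0),
      mul_le_mul_of_nonneg_left h1 (abs_nonneg (f 0))]

theorem SiderisSol.eqOn {γ δ lam₁ : ℝ} {f g : ℝ → ℝ} (hf : SiderisSol γ δ lam₁ f)
    (hg : SiderisSol γ δ lam₁ g) : EqOn f g (Ici 0) := by
  have hF : LocallyLipschitzOn (Ioi 0) fun x : ℝ => δ * x ^ (-(3 * γ - 2)) := by
    refine ContDiffOn.locallyLipschitzOn (convex_Ioi 0) fun x hx => ?_
    exact (contDiffAt_const.mul (contDiffAt_rpow_const_of_ne (ne_of_gt hx))).contDiffWithinAt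
  have hsol : ∀ {x : ℝ → ℝ}, SiderisSol γ δ lam₁ x → ∀ t ∈ Ici (0 : ℝ), x t ∈ Ioi 0 ∧
      HasDerivAt x (deriv x t) t ∧ HasDerivAt (deriv x) (δ * x t ^ (-(3 * γ - 2))) t := by
    intro x hx t ht
    obtain ⟨hpos, hx', hx'', hode⟩ := hx.1 t ht
    refine ⟨hpos, hx', hx''.congr_deriv ?_⟩
    rw [rpow_neg hpos.le, ← hode, mul_inv_cancel_right₀ (rpow_pos_of_pos hpos _).ne']
  intro b hb
  exact ODE_solution_unique_of_second_order hF (fun t ht => hsol hf t ht.1)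
    (fun t ht => hsol hg t ht.1) (hf.2.1.trans hg.2.1.symm)
    (hf.2.2.trans hg.2.2.symm) ⟨hb, le_rfl⟩

namespace Sideris

variable (α δ lam₁ : ℝ)

def q (v : ℝ) : ℝ := 1 + (α - 1) / (2 * δ) * (lam₁ ^ 2 - v ^ 2)

def vmax : ℝ := √(lam₁ ^ 2 + 2 * δ / (α - 1))

def lamOfSpeed (v : ℝ) : ℝ := q α δ lam₁ v ^ (-(α - 1)⁻¹)

def timeDensity (v : ℝ) : ℝ := q α δ lam₁ v ^ (-(α / (α - 1))) / δ

def timeOfSpeed (v : ℝ) : ℝ := ∫ w in lam₁..v, timeDensity α δ lam₁ w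

def speed : ℝ → ℝ := invFunOn (timeOfSpeed α δ lam₁) (Ioo (-vmax α δ lam₁) (vmax α δ lam₁))

def solution (t : ℝ) : ℝ := lamOfSpeed α δ lam₁ (speed α δ lam₁ t)

variable {α δ lam₁}

theorem q_eq (hα : 1 < α) (hδ : 0 < δ) (v : ℝ) :
    q α δ lam₁ v = (α - 1) / (2 * δ) * (vmax α δ lam₁ ^ 2 - v ^ 2) := by
  have hα' : α - 1 ≠ 0 := by linarith
  rw [vmax, sq_sqrt (by have := div_pos (mul_pos two_pos hδ) (sub_pos.2 hα); positivity), q]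
  field_simp
  ring

theorem lam₁_mem_Ioo (hα : 1 < α) (hδ : 0 < δ) : lam₁ ∈ Ioo (-vmax α δ lam₁) (vmax α δ lam₁) :=
  abs_lt.1 <| by
    rw [vmax, lt_sqrt (abs_nonneg _), sq_abs]
    linarith [div_pos (mul_pos two_pos hδ) (sub_pos.2 hα)]

theorem q_pos (hα : 1 < α) (hδ : 0 < δ) {v : ℝ} (hv : v ∈ Ioo (-vmax α δ lam₁) (vmax α δ lam₁)) :
    0 < q α δ lam₁ v := by
  rw [q_eq hα hδ]
  exact mul_pos (div_pos (sub_pos.2 hα) (mul_pos two_pos hδ)) (sub_pos.2 (sq_lt_sq' hv.1 hv.2))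

theorem timeDensity_pos (hδ : 0 < δ) {v : ℝ} (hv : 0 < q α δ lam₁ v) : 0 < timeDensity α δ lam₁ v :=
  div_pos (rpow_pos_of_pos hv _) hδ

theorem lamOfSpeed_rpow (hα : 1 < α) {v : ℝ} (hv : 0 < q α δ lam₁ v) :
    lamOfSpeed α δ lam₁ v ^ α = q α δ lam₁ v ^ (-(α / (α - 1))) := by
  rw [lamOfSpeed, ← rpow_mul hv.le]
  congr 1
  field_simp

theorem hasDerivAt_lamOfSpeed (hα : 1 < α) (hδ : 0 < δ) {v : ℝ} (hv : 0 < q α δ lam₁ v) :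
    HasDerivAt (lamOfSpeed α δ lam₁) (v * timeDensity α δ lam₁ v) v := by
  have hq : HasDerivAt (q α δ lam₁) ((α - 1) / (2 * δ) * -(2 * v)) v :=
    (((hasDerivAt_pow 2 v).const_sub _).const_mul _).const_add 1 |>.congr_deriv (by ring)
  refine ((hasDerivAt_rpow_const (Or.inl hv.ne')).comp v hq).congr_deriv ?_
  have hα' : α - 1 ≠ 0 := by linarith
  rw [timeDensity, show -(α - 1)⁻¹ - 1 = -(α / (α - 1)) by field_simp; ring]
  field_simp

theorem continuousOn_timeDensity (hα : 1 < α) (hδ : 0 < δ) :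
    ContinuousOn (timeDensity α δ lam₁) (Ioo (-vmax α δ lam₁) (vmax α δ lam₁)) := fun _ hv =>
  (((continuous_const.add (continuous_const.mul (continuous_const.sub (continuous_pow 2)))
    ).continuousAt.rpow_const (Or.inl (q_pos hα hδ hv).ne')).div_const δ).continuousWithinAt

theorem hasDerivAt_timeOfSpeed (hα : 1 < α) (hδ : 0 < δ) {v : ℝ}
    (hv : v ∈ Ioo (-vmax α δ lam₁) (vmax α δ lam₁)) :
    HasDerivAt (timeOfSpeed α δ lam₁) (timeDensity α δ lam₁ v) v :=
  intervalIntegral.integral_hasDerivAt_right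
    (((continuousOn_timeDensity hα hδ).mono
      (ordConnected_Ioo.uIcc_subset (lam₁_mem_Ioo hα hδ) hv)).intervalIntegrable)
    ((continuousOn_timeDensity hα hδ).stronglyMeasurableAtFilter isOpen_Ioo v hv)
    ((continuousOn_timeDensity hα hδ).continuousAt (isOpen_Ioo.mem_nhds hv))

theorem strictMonoOn_timeOfSpeed (hα : 1 < α) (hδ : 0 < δ) :
    StrictMonoOn (timeOfSpeed α δ lam₁) (Ioo (-vmax α δ lam₁) (vmax α δ lam₁)) :=
  strictMonoOn_of_hasDerivWithinAt_pos (convex_Ioo _ _)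
    (fun _ hv => (hasDerivAt_timeOfSpeed hα hδ hv).continuousAt.continuousWithinAt)
    (fun _ hv => (hasDerivAt_timeOfSpeed hα hδ (interior_subset hv)).hasDerivWithinAt)
    fun _ hv => timeDensity_pos hδ (q_pos hα hδ (interior_subset hv))

theorem exists_rpow_le_timeDensity (hα : 1 < α) (hδ : 0 < δ) : ∃ c > 0,
    ∀ w ∈ Ioo (-vmax α δ lam₁) (vmax α δ lam₁),
      c * (vmax α δ lam₁ - w) ^ (-(α / (α - 1))) ≤ timeDensity α δ lam₁ w := by
  set p := α / (α - 1)
  have hA : 0 < (α - 1) / δ := div_pos (sub_pos.2 hα) hδ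
  have hK : 0 < (α - 1) / δ * vmax α δ lam₁ := mul_pos hA (by
    linarith [(lam₁_mem_Ioo (lam₁ := lam₁) hα hδ).1, (lam₁_mem_Ioo (lam₁ := lam₁) hα hδ).2])
  refine ⟨((α - 1) / δ * vmax α δ lam₁) ^ (-p) / δ, by positivity, fun w hw => ?_⟩
  have hgap : 0 < vmax α δ lam₁ - w := sub_pos.2 hw.2
  have hq : q α δ lam₁ w ≤ (α - 1) / δ * vmax α δ lam₁ * (vmax α δ lam₁ - w) := by
    calc q α δ lam₁ w = (α - 1) / δ * ((vmax α δ lam₁ - w) * ((vmax α δ lam₁ + w) / 2)) := by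
          rw [q_eq hα hδ]; ring
      _ ≤ (α - 1) / δ * ((vmax α δ lam₁ - w) * vmax α δ lam₁) :=
          mul_le_mul_of_nonneg_left (mul_le_mul_of_nonneg_left (by linarith [hw.2]) hgap.le) hA.le
      _ = _ := by ring
  calc ((α - 1) / δ * vmax α δ lam₁) ^ (-p) / δ * (vmax α δ lam₁ - w) ^ (-p)
      = ((α - 1) / δ * vmax α δ lam₁ * (vmax α δ lam₁ - w)) ^ (-p) / δ := by
        rw [mul_rpow hK.le hgap.le]; ring
    _ ≤ timeDensity α δ lam₁ w :=
        div_le_div_of_nonneg_right (rpow_le_rpow_of_nonpos (q_pos hα hδ hw) hq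
          (neg_nonpos.2 (div_pos (by linarith) (by linarith)).le)) hδ.le

theorem tendsto_integral_timeDensity_atTop (hα : 1 < α) (hδ : 0 < δ) {a : ℝ}
    (ha : a ∈ Ioo (-vmax α δ lam₁) (vmax α δ lam₁)) :
    Tendsto (fun v => ∫ w in a..v, timeDensity α δ lam₁ w) (𝓝[<] vmax α δ lam₁) atTop := by
  obtain ⟨c, hc, hle⟩ := exists_rpow_le_timeDensity hα hδ
  have hsub : Ico a (vmax α δ lam₁) ⊆ Ioo (-vmax α δ lam₁) (vmax α δ lam₁) :=
    fun w hw => ⟨ha.1.trans_le hw.1, hw.2⟩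
  exact tendsto_intervalIntegral_nhdsLT_atTop ha.2 hc
    ((one_lt_div (by linarith)).2 (by linarith)) ((continuousOn_timeDensity hα hδ).mono hsub)
    fun w hw => hle w (hsub hw)

theorem timeOfSpeed_eq_neg_integral (v : ℝ) :
    timeOfSpeed α δ lam₁ v = -∫ w in -lam₁..-v, timeDensity α δ lam₁ w := by
  calc timeOfSpeed α δ lam₁ v = ∫ w in lam₁..v, timeDensity α δ lam₁ (-w) := by
        simp only [timeOfSpeed, timeDensity, q, neg_sq]
    _ = _ := by rw [intervalIntegral.integral_comp_neg, intervalIntegral.integral_symm]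

theorem surjOn_timeOfSpeed (hα : 1 < α) (hδ : 0 < δ) :
    SurjOn (timeOfSpeed α δ lam₁) (Ioo (-vmax α δ lam₁) (vmax α δ lam₁)) univ := by
  have hlam := lam₁_mem_Ioo (lam₁ := lam₁) hα hδ
  have hneg : -lam₁ ∈ Ioo (-vmax α δ lam₁) (vmax α δ lam₁) := ⟨neg_lt_neg hlam.2, neg_lt.1 hlam.1⟩
  have hlt : -vmax α δ lam₁ < vmax α δ lam₁ := hlam.1.trans hlam.2
  refine ContinuousOn.surjOn_of_tendsto (nonempty_Ioo.2 hlt)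
    (fun v hv => (hasDerivAt_timeOfSpeed hα hδ hv).continuousAt.continuousWithinAt) ?_ ?_
  · rw [tendsto_comp_coe_Ioo_atBot hlt, funext timeOfSpeed_eq_neg_integral]
    exact tendsto_neg_atTop_atBot.comp
      ((tendsto_integral_timeDensity_atTop hα hδ hneg).comp tendsto_neg_nhdsGT_neg)
  · rw [tendsto_comp_coe_Ioo_atTop hlt]
    exact tendsto_integral_timeDensity_atTop hα hδ hlam

theorem speed_mem_Ioo (hα : 1 < α) (hδ : 0 < δ) (t : ℝ) :
    speed α δ lam₁ t ∈ Ioo (-vmax α δ lam₁) (vmax α δ lam₁) :=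
  invFunOn_mem (surjOn_timeOfSpeed hα hδ trivial)

theorem speed_timeOfSpeed (hα : 1 < α) (hδ : 0 < δ) {v : ℝ}
    (hv : v ∈ Ioo (-vmax α δ lam₁) (vmax α δ lam₁)) :
    speed α δ lam₁ (timeOfSpeed α δ lam₁ v) = v :=
  (strictMonoOn_timeOfSpeed hα hδ).injOn.leftInvOn_invFunOn hv

theorem speed_zero (hα : 1 < α) (hδ : 0 < δ) : speed α δ lam₁ 0 = lam₁ := by
  simpa [timeOfSpeed] using speed_timeOfSpeed hα hδ (lam₁_mem_Ioo hα hδ)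

theorem hasDerivAt_speed (hα : 1 < α) (hδ : 0 < δ) (t : ℝ) :
    HasDerivAt (speed α δ lam₁) (timeDensity α δ lam₁ (speed α δ lam₁ t))⁻¹ t :=
  (strictMonoOn_timeOfSpeed hα hδ).hasDerivAt_invFunOn (surjOn_timeOfSpeed hα hδ) isOpen_Ioo
    (fun _ hv => hasDerivAt_timeOfSpeed hα hδ hv)
    (fun _ hv => (timeDensity_pos hδ (q_pos hα hδ hv)).ne') t

theorem hasDerivAt_solution (hα : 1 < α) (hδ : 0 < δ) (t : ℝ) :
    HasDerivAt (solution α δ lam₁) (speed α δ lam₁ t) t := by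
  have hq := q_pos hα hδ (speed_mem_Ioo (lam₁ := lam₁) hα hδ t)
  refine ((hasDerivAt_lamOfSpeed hα hδ hq).comp t (hasDerivAt_speed hα hδ t)).congr_deriv ?_
  rw [mul_assoc, mul_inv_cancel₀ (timeDensity_pos hδ hq).ne', mul_one]

theorem siderisSol_solution {γ : ℝ} (hγ : 1 < γ) (hδ : 0 < δ) :
    SiderisSol γ δ lam₁ (solution (3 * γ - 2) δ lam₁) := by
  have hα : 1 < 3 * γ - 2 := by linarith
  have hderiv : deriv (solution (3 * γ - 2) δ lam₁) = speed (3 * γ - 2) δ lam₁ :=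
    funext fun t => (hasDerivAt_solution hα hδ t).deriv
  refine ⟨fun t _ => ?_, ?_, by rw [hderiv, speed_zero hα hδ]⟩
  · have hq := q_pos hα hδ (speed_mem_Ioo (lam₁ := lam₁) hα hδ t)
    rw [hderiv, (hasDerivAt_speed hα hδ t).deriv]
    refine ⟨rpow_pos_of_pos hq _, hasDerivAt_solution hα hδ t, hasDerivAt_speed hα hδ t, ?_⟩
    rw [solution, lamOfSpeed_rpow hα hq, timeDensity, inv_div,
      div_mul_cancel₀ _ (rpow_pos_of_pos hq _).ne']
  · rw [solution, speed_zero hα hδ, lamOfSpeed, q, sub_self, mul_zero, add_zero, one_rpow]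

theorem exists_linear_bounds_solution (hα : 1 < α) (hδ : 0 < δ) :
    ∃ c₁ c₂ : ℝ, 0 < c₁ ∧ c₁ ≤ c₂ ∧ ∃ T : ℝ, ∀ t ≥ T,
      c₁ * t ≤ solution α δ lam₁ t ∧ solution α δ lam₁ t ≤ c₂ * t := by
  have hlam := lam₁_mem_Ioo (lam₁ := lam₁) hα hδ
  have hhalf : vmax α δ lam₁ / 2 ∈ Ioo (-vmax α δ lam₁) (vmax α δ lam₁) :=
    ⟨by linarith [hlam.1, hlam.2], by linarith [hlam.1, hlam.2]⟩
  refine exists_linear_bounds_of_hasDerivAt (t₁ := timeOfSpeed α δ lam₁ (vmax α δ lam₁ / 2))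
    (hasDerivAt_solution hα hδ) (half_pos (neg_lt_self_iff.1 (hlam.1.trans hlam.2)))
    (fun t => (speed_mem_Ioo hα hδ t).2.le) fun t ht => ?_
  rw [← speed_timeOfSpeed hα hδ hhalf]
  exact ((strictMonoOn_timeOfSpeed hα hδ).strictMono_invFunOn
    (surjOn_timeOfSpeed hα hδ)).monotone ht

end Sideris

/-- Global existence, uniqueness on `[0,∞)`, and linear growth for the
Sideris ODE `λ'' λ^{3γ-2} = δ` with `1 < γ ≤ 5/3`, `δ > 0`. -/
theorem sideris_ode_global (γ δ lam₁ : ℝ) (hγ : 1 < γ ∧ γ ≤ 5/3) (hδ : 0 < δ) :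
    ∃ lam : ℝ → ℝ, SiderisSol γ δ lam₁ lam ∧
      (∀ lam' : ℝ → ℝ, SiderisSol γ δ lam₁ lam' → ∀ t ∈ Ici (0:ℝ), lam' t = lam t) ∧
      ∃ c₁ c₂ : ℝ, 0 < c₁ ∧ c₁ ≤ c₂ ∧
        ∃ T : ℝ, ∀ t ≥ T, c₁ * t ≤ lam t ∧ lam t ≤ c₂ * t := by
  have hsol := Sideris.siderisSol_solution (lam₁ := lam₁) hγ.1 hδ
  exact ⟨_, hsol, fun _ h => h.eqOn hsol,
    Sideris.exists_linear_bounds_solution (by linarith [hγ.1]) hδ⟩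
end
end

section
/- Let G > 0, χ solve χ'' + G/χ² = 0 with χ > 0, χ' < 0, and suppose χ(t) → 0 as t → t* < ∞. Then there exists c > 0 (explicitly c = (9G/2)^{1/3}) such that χ(t)/(t* - t)^{2/3} → c as t → t*⁻. -/
/-!
The energy `χ'²/2 - G/χ` is conserved, so `χ χ'² = 2Eχ + 2G` for a constant `E`, and since `χ' < 0`
this gives `(χ √χ)' = (3/2) √χ χ' = -(3/2) √(2Eχ + 2G) → -(3/2) √(2G)` as `χ → 0`.
By L'Hôpital, `χ^{3/2} / (t* - t) → (3/2) √(2G)`, and raising to the power `2/3` gives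
`χ / (t* - t)^{2/3} → ((9/4) · 2G)^{1/3} = (9G/2)^{1/3}`.
-/

open Real Set Filter Topology

lemma hasDerivAt_energy {x v : ℝ → ℝ} {G a t : ℝ} (hx : HasDerivAt x (v t) t)
    (hv : HasDerivAt v a t) (hode : a + G / x t ^ 2 = 0) (hxt : x t ≠ 0) :
    HasDerivAt (fun s => v s ^ 2 / 2 - G / x s) 0 t := by
  have h : HasDerivAt (fun s => v s ^ 2 / 2 - G / x s) _ t :=
    ((hv.pow 2).div_const 2).sub ((hasDerivAt_const t G).div hx hxt)
  refine h.congr_deriv ?_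
  rw [eq_neg_of_add_eq_zero_left hode]
  field_simp
  ring

lemma eq_of_hasDerivAt_zero_Ico {f : ℝ → ℝ} {a b x : ℝ} (hf : ∀ y ∈ Ico a b, HasDerivAt f 0 y)
    (hx : x ∈ Ico a b) : f x = f a :=
  constant_of_has_deriv_right_zero
    (fun y hy => (hf y ⟨hy.1, hy.2.trans_lt hx.2⟩).continuousAt.continuousWithinAt)
    (fun y hy => (hf y ⟨hy.1, hy.2.trans hx.2⟩).hasDerivWithinAt) x ⟨hx.1, le_rfl⟩

lemma sqrt_mul_eq_neg_sqrt_of_energy {x v G E : ℝ} (hx : 0 < x) (hv : v < 0)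
    (hE : v ^ 2 / 2 - G / x = E) : √x * v = -√(2 * E * x + 2 * G) := by
  have hmul : x * v ^ 2 = 2 * E * x + 2 * G := by
    rw [← hE]
    field_simp
    ring
  calc √x * v = -(√x * √(v ^ 2)) := by rw [sqrt_sq_eq_abs, abs_of_neg hv]; ring
    _ = -√(2 * E * x + 2 * G) := by rw [← sqrt_mul hx.le, hmul]

lemma HasDerivAt.mul_sqrt_self {x : ℝ → ℝ} {x' t : ℝ} (hx : HasDerivAt x x' t) (hpos : 0 < x t) :
    HasDerivAt (fun s => x s * √(x s)) (3 / 2 * √(x t) * x') t := by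
  refine (hx.mul (hx.sqrt hpos.ne')).congr_deriv ?_
  have hs : √(x t) ≠ 0 := (sqrt_pos.2 hpos).ne'
  field_simp
  linear_combination -x' * sq_sqrt hpos.le

lemma tendsto_div_sub_nhdsLT {f f' : ℝ → ℝ} {b L : ℝ}
    (hf : ∀ᶠ t in 𝓝[<] b, HasDerivAt f (f' t) t) (hf0 : Tendsto f (𝓝[<] b) (𝓝 0))
    (hf' : Tendsto f' (𝓝[<] b) (𝓝 (-L))) :
    Tendsto (fun t => f t / (b - t)) (𝓝[<] b) (𝓝 L) := by
  refine HasDerivAt.lhopital_zero_nhdsLT (g' := fun _ => -1) hf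
    (Eventually.of_forall fun t => by simpa using (hasDerivAt_id t).const_sub b)
    (Eventually.of_forall fun _ => by norm_num) hf0 ?_ ?_
  · exact tendsto_nhdsWithin_of_tendsto_nhds ((continuous_sub_left b).tendsto' b 0 (sub_self b))
  · simpa [div_neg] using hf'.neg

lemma mul_sqrt_div_rpow_two_thirds {x y : ℝ} (hx : 0 ≤ x) (hy : 0 ≤ y) :
    (x * √x / y) ^ ((2 : ℝ) / 3) = x / y ^ ((2 : ℝ) / 3) := by
  have hx32 : x * √x = x ^ ((3 : ℝ) / 2) := by
    rw [sqrt_eq_rpow, ← rpow_one_add' hx (by norm_num)]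
    norm_num
  rw [div_rpow (by positivity) hy, hx32, ← rpow_mul hx]
  norm_num

lemma three_halves_mul_sqrt_rpow_two_thirds {G : ℝ} (hG : 0 ≤ G) :
    (3 / 2 * √(2 * G)) ^ ((2 : ℝ) / 3) = (9 * G / 2) ^ ((1 : ℝ) / 3) := by
  have hsq : (3 / 2 * √(2 * G)) ^ 2 = 9 * G / 2 := by
    rw [mul_pow, sq_sqrt (by linarith)]
    ring
  rw [show (2 : ℝ) / 3 = 2 * (1 / 3) by norm_num, rpow_mul (by positivity), rpow_two, hsq]

/-- Universal `2/3` blow-up rate for the dust collapse ODE: if `χ`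
solves `χ'' + G/χ² = 0` with `χ > 0`, `χ' < 0` and `χ(t) → 0` as `t → t*⁻`,
then `χ(t)/(t*-t)^{2/3} → (9G/2)^{1/3}`. -/
theorem dust_collapse_rate (G tstar : ℝ) (χ : ℝ → ℝ)
    (hG : 0 < G) (ht : 0 < tstar)
    (hsol : ∀ t ∈ Ico (0:ℝ) tstar, 0 < χ t ∧ deriv χ t < 0 ∧
      HasDerivAt χ (deriv χ t) t ∧
      HasDerivAt (deriv χ) (deriv (deriv χ) t) t ∧
      deriv (deriv χ) t + G / (χ t)^2 = 0)
    (hlim : Tendsto χ (𝓝[<] tstar) (𝓝 0)) :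
    Tendsto (fun t => χ t / (tstar - t) ^ ((2:ℝ)/3)) (𝓝[<] tstar)
      (𝓝 ((9 * G / 2) ^ ((1:ℝ)/3))) := by
  set E := deriv χ 0 ^ 2 / 2 - G / χ 0
  have hIoo : ∀ᶠ t in 𝓝[<] tstar, t ∈ Ico 0 tstar :=
    mem_of_superset (Ioo_mem_nhdsLT ht) Ioo_subset_Ico_self
  have henergy (t) (htI : t ∈ Ico 0 tstar) : deriv χ t ^ 2 / 2 - G / χ t = E :=
    eq_of_hasDerivAt_zero_Ico (fun s hs => have ⟨hpos, _, hχ', hχ'', hode⟩ := hsol s hs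
      hasDerivAt_energy hχ' hχ'' hode hpos.ne') htI
  have hderiv : ∀ᶠ t in 𝓝[<] tstar,
      HasDerivAt (fun s => χ s * √(χ s)) (-(3 / 2 * √(2 * E * χ t + 2 * G))) t := by
    filter_upwards [hIoo] with t htI
    obtain ⟨hpos, hneg, hχ', -, -⟩ := hsol t htI
    have h := hχ'.mul_sqrt_self hpos
    rwa [mul_assoc, sqrt_mul_eq_neg_sqrt_of_energy hpos hneg (henergy t htI), mul_neg] at h
  have hderiv_lim : Tendsto (fun t => -(3 / 2 * √(2 * E * χ t + 2 * G))) (𝓝[<] tstar)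
      (𝓝 (-(3 / 2 * √(2 * G)))) := by
    simpa using (((hlim.const_mul (2 * E)).add_const (2 * G)).sqrt.const_mul (3 / 2)).neg
  have hf0 : Tendsto (fun t => χ t * √(χ t)) (𝓝[<] tstar) (𝓝 0) := by
    simpa using hlim.mul hlim.sqrt
  have hmain := ((continuousAt_rpow_const _ ((2 : ℝ) / 3) (Or.inr (by norm_num))).tendsto).comp
    (tendsto_div_sub_nhdsLT hderiv hf0 hderiv_lim)
  rw [three_halves_mul_sqrt_rpow_two_thirds hG.le] at hmain
  refine hmain.congr' ?_
  filter_upwards [hIoo] with t htI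
  exact mul_sqrt_div_rpow_two_thirds (hsol t htI).1.le (sub_nonneg.2 htI.2.le)
end

section
/- Suppose (ρ, ω) is a smooth solution of the isothermal self-similar system ρ' = 2yρω(ω-ρ)/(1 - y²ω²), ω' = (1-3ω)/y - 2yω²(ω-ρ)/(1 - y²ω²) in a neighborhood of a sonic point y* > 0 at which 1 - y*²ω(y*)² = 0 and ω(y*) > 0. Then necessarily ω(y*) = ρ(y*) = 1/y*. -/
noncomputable section
open Real Set Filter Topology Metric

/-- At a sonic point `y*` of a smooth solution of the isothermal self-similar
system with `ω(y*) > 0`, necessarily `ω(y*) = ρ(y*) = 1/y*`. -/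
theorem sonic_point_values (ρ ω : ℝ → ℝ) (ystar δ : ℝ)
    (hystar : 0 < ystar) (hδ : 0 < δ) (hδy : δ < ystar)
    (hsmρ : ContDiffOn ℝ 1 ρ (ball ystar δ))
    (hsmω : ContDiffOn ℝ 1 ω (ball ystar δ))
    (hsol : ∀ y ∈ ball ystar δ, y ≠ ystar →
      1 - y^2 * (ω y)^2 ≠ 0 ∧
      HasDerivAt ρ (2*y*ρ y*ω y*(ω y - ρ y)/(1 - y^2*(ω y)^2)) y ∧
      HasDerivAt ω ((1 - 3*ω y)/y - 2*y*(ω y)^2*(ω y - ρ y)/(1 - y^2*(ω y)^2)) y)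
    (hsonic : 1 - ystar^2 * (ω ystar)^2 = 0)
    (hωpos : 0 < ω ystar) :
    ω ystar = 1 / ystar ∧ ρ ystar = 1 / ystar := by
  have hball : ball ystar δ ∈ 𝓝 ystar := isOpen_ball.mem_nhds (mem_ball_self hδ)
  have hωval : ω ystar = 1 / ystar := by
    have ht : (ystar * ω ystar) * (ystar * ω ystar) = 1 := by linear_combination -hsonic
    rcases mul_self_eq_one_iff.mp ht with h | h
    · field_simp; linarith
    · nlinarith [mul_pos hystar hωpos]
  refine ⟨hωval, ?_⟩
  -- continuity facts at ystar
  have hωc : ContinuousAt ω ystar := (hsmω.continuousOn.continuousAt hball)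
  have hρc : ContinuousAt ρ ystar := (hsmρ.continuousOn.continuousAt hball)
  have hderivc : ContinuousAt (deriv ω) ystar :=
    (hsmω.continuousOn_deriv_of_isOpen isOpen_ball le_rfl).continuousAt hball
  -- suppose ρ ystar ≠ ω ystar and derive a contradiction
  by_contra hρval
  have hne : ω ystar - ρ ystar ≠ 0 := by
    intro h; apply hρval; rw [← hωval]; linarith [sub_eq_zero.mp h]
  set l : Filter ℝ := 𝓝[≠] ystar with hl
  have hmem : ∀ᶠ y in l, y ∈ ball ystar δ ∧ y ≠ ystar := by
    filter_upwards [nhdsWithin_le_nhds hball, self_mem_nhdsWithin] with y h1 h2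
    exact ⟨h1, h2⟩
  set g : ℝ → ℝ := fun y => 2*y*(ω y)^2*(ω y - ρ y) with hg
  set h : ℝ → ℝ := fun y => 1 - y^2*(ω y)^2 with hh
  set f : ℝ → ℝ := fun y => (1 - 3*ω y)/y - deriv ω y with hf
  have hfeq : ∀ᶠ y in l, f y = g y / h y := by
    filter_upwards [hmem] with y ⟨hy1, hy2⟩
    have hd := (hsol y hy1 hy2).2.2
    simp only [hf, hg, hh]
    rw [hd.deriv]; ring
  -- f tends to a finite limit
  have hfc : ContinuousAt f ystar := by
    apply ContinuousAt.sub
    · exact ((continuousAt_const.sub (continuousAt_const.mul hωc)).div continuousAt_id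
        (ne_of_gt hystar))
    · exact hderivc
  have habsfl : Tendsto (fun y => |f y|) l (𝓝 |f ystar|) :=
    (hfc.tendsto.mono_left nhdsWithin_le_nhds).abs
  -- |g| tends to a positive limit
  have hgc : ContinuousAt g ystar := by
    simp only [hg]; fun_prop
  have hgval : g ystar ≠ 0 := by
    simp only [hg]
    exact mul_ne_zero (mul_ne_zero (by positivity) (by positivity)) hne
  have habsg : Tendsto (fun y => |g y|) l (𝓝 |g ystar|) :=
    (hgc.tendsto.mono_left nhdsWithin_le_nhds).abs
  -- |h| tends to 0 from the right
  have hhc : ContinuousAt h ystar := by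
    simp only [hh]; fun_prop
  have hhval : h ystar = 0 := hsonic
  have habsh : Tendsto (fun y => |h y|) l (𝓝[>] 0) := by
    rw [tendsto_nhdsWithin_iff]
    constructor
    · have h0 : Tendsto (fun y => |h y|) l (𝓝 |h ystar|) :=
        (hhc.tendsto.mono_left nhdsWithin_le_nhds).abs
      rwa [hhval, abs_zero] at h0
    · filter_upwards [hmem] with y ⟨hy1, hy2⟩
      exact abs_pos.mpr ((hsol y hy1 hy2).1)
  have hinv : Tendsto (fun y => (|h y|)⁻¹) l atTop := habsh.inv_tendsto_nhdsGT_zero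
  have hatTop : Tendsto (fun y => |g y| * (|h y|)⁻¹) l atTop :=
    habsg.pos_mul_atTop (abs_pos.mpr hgval) hinv
  have habsfTop : Tendsto (fun y => |f y|) l atTop := by
    apply hatTop.congr'
    filter_upwards [hfeq] with y hy
    rw [hy, abs_div, div_eq_mul_inv]
  exact not_tendsto_atTop_of_tendsto_nhds habsfl habsfTop
end
end
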